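/- If (RG)^- is anticommutative and x, y ∈ G satisfy x^* ≠ x, y^* ≠ y, and y ∉ ker σ, then y^{-1}xy ∈ {x, x^*}. -/

import Mathlib

open Finsupp

/-- The generalized oriented map σ* on the group ring RG. -/
noncomputable def sigmaStar {R : Type} [CommRing R] {G : Type} [Group G]
    (inv : G → G) (σ : G →* Rˣ) (α : MonoidAlgebra R G) : MonoidAlgebra R G :=
  MonoidAlgebra.ofCoeff (α.coeff.sum fun x a => Finsupp.single (inv x) ((σ x : R) * a))

/-- The set of skew-symmetric elements of RG under σ*. -/
def skewSet {R : Type} [CommRing R] {G : Type} [Group G]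
    (inv : G → G) (σ : G →* Rˣ) : Set (MonoidAlgebra R G) :=
  {α | sigmaStar inv σ α = -α}

/-!
The elements `δ g = g - σ(g) g*` are skew. For `g* ≠ g`, comparing coefficients in
`2 δ_g² = 0` shows that `g` commutes with `g*`, that `g*² = g²` and that `4 = 0` in `R`.

Suppose `xy ∉ {yx, yx*}` and compare the coefficient of `xy` in `δ_x δ_y + δ_y δ_x = 0`:
besides `xy` itself, only `y* x`, `x* y*` and `y* x*` can contribute. If `y* x = xy`, then
either `σ(y) = 1` or, by pure group theory, `xy = yx*`. Otherwise the coefficient is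
`1 + σ(x)σ(y)·#{x* y* = xy, y* x* = xy}`; the count `0` gives `1 = 0`, the count `2` gives
`2 = 2 + 4σ(x)σ(y) = 0`, and the count `1` forces `σ(xy) = -1` and `(xy)* ∈ {xy, yx}`. Then `xy`,
respectively `δ_{xy} = xy + yx`, is skew, and its anticommutator with `δ_y`, respectively
`δ_x`, has a coefficient that cannot vanish.
-/

section

variable {R G : Type} [CommRing R] [Group G]

lemma sigmaStar_single (inv : G → G) (σ : G →* Rˣ) (g : G) (r : R) :
    sigmaStar inv σ (MonoidAlgebra.single g r) = MonoidAlgebra.single (inv g) (σ g * r) :=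
  congrArg MonoidAlgebra.ofCoeff (sum_single_index (by simp))

lemma sigmaStar_sub (inv : G → G) (σ : G →* Rˣ) (α β : MonoidAlgebra R G) :
    sigmaStar inv σ (α - β) = sigmaStar inv σ α - sigmaStar inv σ β :=
  congrArg MonoidAlgebra.ofCoeff (sum_sub_index fun _ _ _ ↦ by rw [mul_sub, single_sub])

lemma single_one_mem_skewSet {inv : G → G} {σ : G →* Rˣ} {g : G} (hg : inv g = g)
    (hσ : (σ g : R) = -1) : MonoidAlgebra.single g (1 : R) ∈ skewSet inv σ := by
  rw [skewSet, Set.mem_ofPred_eq, sigmaStar_single, hg, hσ, mul_one, MonoidAlgebra.single_neg]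

noncomputable def skewElt (inv : G → G) (σ : G →* Rˣ) (g : G) : MonoidAlgebra R G :=
  MonoidAlgebra.single g 1 - MonoidAlgebra.single (inv g) (σ g : R)

lemma skewElt_mem_skewSet {inv : G → G} (hinv : ∀ g, inv (inv g) = g) {σ : G →* Rˣ}
    (hcompat : ∀ g, g * inv g ∈ σ.ker) (g : G) : skewElt inv σ g ∈ skewSet inv σ := by
  have hσ : (σ (inv g) : R) * σ g = 1 := by
    rw [mul_comm, ← Units.val_mul, ← map_mul, hcompat g, Units.val_one]
  rw [skewSet, Set.mem_ofPred_eq, skewElt, sigmaStar_sub, sigmaStar_single, sigmaStar_single,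
    hinv, mul_one, hσ, neg_sub]

lemma skewElt_mul_skewElt (inv : G → G) (σ : G →* Rˣ) (g h : G) :
    skewElt inv σ g * skewElt inv σ h =
      MonoidAlgebra.single (g * h) 1 - MonoidAlgebra.single (g * inv h) (σ h : R)
        - MonoidAlgebra.single (inv g * h) (σ g : R)
        + MonoidAlgebra.single (inv g * inv h) (σ g * σ h : R) := by
  simp only [skewElt, sub_mul, mul_sub, MonoidAlgebra.single_mul_single, one_mul, mul_one]
  abel

lemma mul_eq_mul_of_commute_of_mul_self_eq {x y x' y' : G} (hx : x' * x = x * x')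
    (hy : y' * y' = y * y) (hyx : y' * x = x * y) (hxy : x' * y' = x * y) : x * y = y * x' := by
  have h1 : x' * y = y * x := mul_left_cancel <| calc
    x * (x' * y) = x' * (y' * x) := by rw [← mul_assoc, ← hx, mul_assoc, hyx]
    _ = x * (y * x) := by rw [← mul_assoc, hxy, mul_assoc]
  have h2 : y * y * x = x * y * y := by rw [← hy, mul_assoc, hyx, ← mul_assoc, hyx]
  refine (mul_right_cancel (b := y) ?_).symm
  rw [mul_assoc, h1, ← mul_assoc, h2]

def SkewAnticommutative (inv : G → G) (σ : G →* Rˣ) : Prop :=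
  ∀ α ∈ skewSet inv σ, ∀ β ∈ skewSet inv σ, α * β + β * α = 0

namespace SkewAnticommutative

variable {inv : G → G} {σ : G →* Rˣ}

lemma anticomm_coeff [DecidableEq G] (hanti : SkewAnticommutative inv σ)
    (hinv : ∀ g, inv (inv g) = g) (hcompat : ∀ g, g * inv g ∈ σ.ker) (g h k : G) :
    ((if g * h = k then 1 else 0) - (if g * inv h = k then (σ h : R) else 0)
        - (if inv g * h = k then (σ g : R) else 0)
        + (if inv g * inv h = k then (σ g * σ h : R) else 0))
      + ((if h * g = k then 1 else 0) - (if h * inv g = k then (σ g : R) else 0)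
        - (if inv h * g = k then (σ h : R) else 0)
        + (if inv h * inv g = k then (σ h * σ g : R) else 0)) = 0 := by
  have H := congrArg (·.coeff k)
    (hanti _ (skewElt_mem_skewSet hinv hcompat g) _ (skewElt_mem_skewSet hinv hcompat h))
  simpa only [skewElt_mul_skewElt, MonoidAlgebra.coeff_add, MonoidAlgebra.coeff_sub,
    MonoidAlgebra.coeff_single, MonoidAlgebra.coeff_zero, Finsupp.add_apply, Finsupp.sub_apply,
    Finsupp.zero_apply, single_apply] using H

lemma inv_mul_comm (hanti : SkewAnticommutative inv σ) (hinv : ∀ g, inv (inv g) = g)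
    (hcompat : ∀ g, g * inv g ∈ σ.ker) (h2 : (2 : R) ≠ 0) {g : G} (hg : inv g ≠ g) :
    inv g * g = g * inv g := by
  classical
  by_contra hc
  have e := hanti.anticomm_coeff hinv hcompat g g (g * inv g)
  simp only [mul_right_inj, mul_left_inj, hg, hg.symm, hc, if_true, if_false] at e
  exact h2 ((σ g).mul_right_eq_zero.1 (by linear_combination -e))

lemma four_eq_zero (hanti : SkewAnticommutative inv σ) (hinv : ∀ g, inv (inv g) = g)
    (hcompat : ∀ g, g * inv g ∈ σ.ker) (h2 : (2 : R) ≠ 0) {g : G} (hg : inv g ≠ g) :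
    (4 : R) = 0 := by
  classical
  have e := hanti.anticomm_coeff hinv hcompat g g (g * inv g)
  simp only [mul_right_inj, mul_left_inj, hg, hg.symm, hanti.inv_mul_comm hinv hcompat h2 hg,
    if_true, if_false] at e
  exact (σ g).mul_right_eq_zero.1 (by linear_combination -e)

lemma inv_mul_inv_self (hanti : SkewAnticommutative inv σ) (hinv : ∀ g, inv (inv g) = g)
    (hcompat : ∀ g, g * inv g ∈ σ.ker) (h2 : (2 : R) ≠ 0) {g : G} (hg : inv g ≠ g) :
    inv g * inv g = g * g := by
  classical
  by_contra hc
  have e := hanti.anticomm_coeff hinv hcompat g g (g * g)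
  simp only [mul_right_inj, mul_left_inj, hg, hc, if_true, if_false] at e
  exact h2 (by linear_combination e)

lemma mul_comm_or_inv_mul_comm_of_single_mem [Nontrivial R] (hanti : SkewAnticommutative inv σ)
    (hinv : ∀ g, inv (inv g) = g) (hcompat : ∀ g, g * inv g ∈ σ.ker) {g y : G}
    (hg : MonoidAlgebra.single g 1 ∈ skewSet inv σ) (hy : inv y ≠ y) :
    y * g = g * y ∨ inv y * g = g * y := by
  classical
  by_contra! h
  have e := congrArg (·.coeff (g * y)) (hanti _ hg _ (skewElt_mem_skewSet hinv hcompat y))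
  simp only [skewElt, mul_sub, sub_mul, MonoidAlgebra.single_mul_single, MonoidAlgebra.coeff_add,
    MonoidAlgebra.coeff_sub, MonoidAlgebra.coeff_single, MonoidAlgebra.coeff_zero,
    Finsupp.add_apply, Finsupp.sub_apply, Finsupp.zero_apply, single_apply, mul_right_inj, hy,
    h.1, h.2, if_true, if_false] at e
  exact one_ne_zero (by linear_combination e)

lemma mul_comm_or_mul_eq_mul_inv_of_inv_eq_swap [Nontrivial R]
    (hanti : SkewAnticommutative inv σ) (hinv : ∀ g, inv (inv g) = g)
    (hcompat : ∀ g, g * inv g ∈ σ.ker) (h2 : (2 : R) ≠ 0) (h4 : (4 : R) = 0) {x y : G}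
    (hx : inv x ≠ x) (hxc : inv x * x = x * inv x)
    (hswap : inv (x * y) = y * x) (hσ : (σ (x * y) : R) = -1) :
    x * y = y * x ∨ x * y = y * inv x := by
  classical
  by_contra! h
  have e := hanti.anticomm_coeff hinv hcompat (x * y) x (x * y * x)
  have hk : x * (y * x) = x * y * x := (mul_assoc x y x).symm
  have hne₁ : y * x * inv x ≠ x * y * x := by
    rw [mul_assoc y, ← hxc, ← mul_assoc]; exact fun h' ↦ h.2 (mul_right_cancel h').symm
  have hne₂ : x * (x * y) ≠ x * y * x := by
    rw [mul_assoc x y]; exact fun h' ↦ h.1 (mul_left_cancel h')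
  have hne₃ : inv x * (y * x) ≠ x * y * x := by
    rw [← mul_assoc]; exact fun h' ↦ hx (mul_right_cancel (mul_right_cancel h'))
  rw [hswap, hσ] at e
  simp only [mul_right_inj, mul_left_inj, hx, h.1.symm, hk, hne₁, hne₂, hne₃, if_true,
    if_false] at e
  by_cases he : inv x * (x * y) = x * y * x
  · simp only [he, if_true] at e
    have hsq : (σ x : R) * σ x = 0 := by linear_combination -(σ x + 2) * e + h4
    exact (σ x).ne_zero ((σ x).mul_right_eq_zero.1 hsq)
  · simp only [he, if_false] at e
    exact h2 (by linear_combination e)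

lemma mul_eq_mul_inv_of_inv_mul_eq (hanti : SkewAnticommutative inv σ)
    (hinv : ∀ g, inv (inv g) = g) (hcompat : ∀ g, g * inv g ∈ σ.ker) (h2 : (2 : R) ≠ 0)
    {x y : G} (hx : inv x ≠ x) (hy : inv y ≠ y) (hσy : (σ y : R) ≠ 1)
    (hyx : inv y * x = x * y) : x * y = y * inv x := by
  classical
  by_contra hne
  have hcomm : x * y ≠ y * x := fun h ↦ hy (mul_right_cancel (hyx.trans h))
  have hyx' : inv y * inv x ≠ x * y := fun h ↦ hx (mul_left_cancel (h.trans hyx.symm))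
  have hxy' : inv x * inv y ≠ x * y := fun h ↦ hne <| mul_eq_mul_of_commute_of_mul_self_eq
    (hanti.inv_mul_comm hinv hcompat h2 hx) (hanti.inv_mul_inv_self hinv hcompat h2 hy) hyx h
  have e := hanti.anticomm_coeff hinv hcompat x y (x * y)
  simp only [mul_right_inj, mul_left_inj, hx, hy, hcomm.symm, Ne.symm hne, hyx, hyx', hxy',
    if_true, if_false] at e
  exact hσy (by linear_combination -e)

lemma mul_comm_or_mul_eq_mul_inv_of_inv_mul_ne [Nontrivial R]
    (hanti : SkewAnticommutative inv σ) (hinv : ∀ g, inv (inv g) = g)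
    (hmul : ∀ g h, inv (g * h) = inv h * inv g) (hcompat : ∀ g, g * inv g ∈ σ.ker)
    (h2 : (2 : R) ≠ 0) {x y : G} (hx : inv x ≠ x) (hy : inv y ≠ y)
    (hyx : inv y * x ≠ x * y) :
    x * y = y * x ∨ x * y = y * inv x := by
  classical
  by_contra! hne
  have h4 := hanti.four_eq_zero hinv hcompat h2 hx
  have hσ : (σ (x * y) : R) = σ x * σ y := by rw [map_mul, Units.val_mul]
  have e := hanti.anticomm_coeff hinv hcompat x y (x * y)
  simp only [mul_right_inj, mul_left_inj, hx, hy, hne.1.symm, hne.2.symm, hyx,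
    if_true, if_false] at e
  by_cases hxy' : inv x * inv y = x * y <;> by_cases hyx' : inv y * inv x = x * y <;>
    simp only [hxy', hyx', if_true, if_false] at e
  · exact h2 (by linear_combination 2 * e - σ x * σ y * h4)
  · have hswap : inv (x * y) = y * x := by rw [← hxy', hmul, hinv, hinv]
    exact (hanti.mul_comm_or_mul_eq_mul_inv_of_inv_eq_swap hinv hcompat h2 h4 hx
      (hanti.inv_mul_comm hinv hcompat h2 hx) hswap (by linear_combination hσ + e)).elim
      hne.1 hne.2
  · have hsymm : inv (x * y) = x * y := by rw [hmul, hyx']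
    have := hanti.mul_comm_or_inv_mul_comm_of_single_mem hinv hcompat
      (single_one_mem_skewSet hsymm (by linear_combination hσ + e)) hy
    simp only [← mul_assoc, mul_left_inj] at this
    exact this.elim (hne.1 ∘ Eq.symm) hyx
  · exact one_ne_zero (by linear_combination e)

end SkewAnticommutative

end

theorem stmt9_general {R : Type} [CommRing R] (hchar : ringChar R ≠ 2) {G : Type} [Group G]
    (inv : G → G) (hmul : ∀ x y : G, inv (x * y) = inv y * inv x)
    (hinv : ∀ x : G, inv (inv x) = x) (σ : G →* Rˣ)
    (hcompat : ∀ x : G, x * inv x ∈ σ.ker)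
    (hanti : ∀ α ∈ skewSet inv σ, ∀ β ∈ skewSet inv σ, α * β + β * α = 0)
    (x y : G) (hx : inv x ≠ x) (hy : inv y ≠ y) (hyN : y ∉ σ.ker) :
    y⁻¹ * x * y = x ∨ y⁻¹ * x * y = inv x := by
  have hσy : (σ y : R) ≠ 1 := fun h ↦ hyN (Units.val_eq_one.1 h)
  have : Nontrivial R := nontrivial_of_ne _ _ hσy
  have h2 : (2 : R) ≠ 0 := Ring.two_ne_zero hchar
  simp only [mul_assoc, inv_mul_eq_iff_eq_mul]
  by_cases hyx : inv y * x = x * y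
  · exact Or.inr <|
      SkewAnticommutative.mul_eq_mul_inv_of_inv_mul_eq hanti hinv hcompat h2 hx hy hσy hyx
  · exact SkewAnticommutative.mul_comm_or_mul_eq_mul_inv_of_inv_mul_ne hanti hinv hmul hcompat h2
      hx hy hyx

theorem stmt9 {R : Type} [CommRing R] (hchar : ringChar R ≠ 2) {G : Type} [Group G]
    (inv : G → G) (hmul : ∀ x y : G, inv (x * y) = inv y * inv x)
    (hinv : ∀ x : G, inv (inv x) = x) (σ : G →* Rˣ) (hnt : σ ≠ 1)
    (hcompat : ∀ x : G, x * inv x ∈ σ.ker)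
    (hanti : ∀ α ∈ skewSet inv σ, ∀ β ∈ skewSet inv σ, α * β + β * α = 0)
    (x y : G) (hx : inv x ≠ x) (hy : inv y ≠ y) (hyN : y ∉ σ.ker) :
    y⁻¹ * x * y = x ∨ y⁻¹ * x * y = inv x :=
  stmt9_general hchar inv hmul hinv σ hcompat hanti x y hx hy hyN
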